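/- Let N ≥ 1 and define the quantum conditional distribution P_{XY|AB} with inputs A ∈ {0,2,...,2N−2}, B ∈ {1,3,...,2N−1} and binary outcomes by measuring the state ψ = (e_{00} + e_{11})/√2 with projections onto u(θ_a), u⊥(θ_a) on the first system and u(θ_b), u⊥(θ_b) on the second, where θ_i = iπ/(2N), u(θ) = (cos(θ/2), sin(θ/2)), u⊥(θ) = (sin(θ/2), −cos(θ/2)). Then the chained Bell quantity of this distribution equals I_N = 2N·sin²(π/(4N)). -/

import Mathlib

open Finset Real

noncomputable section

/-- The chained Bell quantity `I_N` of a bipartite conditional distribution.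
Alice's input `a : Fin N` stands for the measurement `2a ∈ {0,2,…,2N-2}` and Bob's input
`b : Fin N` stands for `2b+1 ∈ {1,3,…,2N-1}`; thus `|2a - (2b+1)| = 1` iff `a = b ∨ a = b+1`.
`I_N = ∑_{a,b : |a-b|=1} ∑_x P(x, x̄ | a, b) + ∑_x P(x, x | 0, 2N-1)`, where `x̄ = 1 - x`. -/
def chainedBell (N : ℕ) (hN : 0 < N) (P : Fin N → Fin N → Fin 2 → Fin 2 → ℝ) : ℝ :=
  (∑ a : Fin N, ∑ b : Fin N,
      if (a : ℕ) = (b : ℕ) ∨ (a : ℕ) = (b : ℕ) + 1 then ∑ x : Fin 2, P a b x (1 - x) else 0)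
    + ∑ x : Fin 2, P ⟨0, hN⟩ ⟨N - 1, by omega⟩ x x

/-- The measurement basis at angle `θ`: outcome `0` corresponds to `u(θ) = (cos(θ/2), sin(θ/2))`
and outcome `1` to `u⊥(θ) = (sin(θ/2), -cos(θ/2))`. -/
def measVec (θ : ℝ) : Fin 2 → Fin 2 → ℂ :=
  fun x i =>
    if x = 0 then (if i = 0 then (Real.cos (θ / 2) : ℂ) else (Real.sin (θ / 2) : ℂ))
    else (if i = 0 then (Real.sin (θ / 2) : ℂ) else (-Real.cos (θ / 2) : ℂ))

/-- The maximally entangled state `ψ = (e₀₀ + e₁₁)/√2`, as a vector in `ℂ² ⊗ ℂ² ≅ ℂ⁴`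
indexed by pairs `(i,j)`. -/
def psi : Fin 2 → Fin 2 → ℂ :=
  fun i j => if i = j then ((1 / Real.sqrt 2 : ℝ) : ℂ) else 0

/-- The quantum conditional distribution obtained by measuring `ψ` with the bases at angles
`θ_{2a} = 2a·π/(2N)` (Alice) and `θ_{2b+1} = (2b+1)·π/(2N)` (Bob); the Born rule gives
outcome pair `(x,y)` probability `|⟨v_x ⊗ w_y, ψ⟩|²`. -/
def quantumP (N : ℕ) (a b : Fin N) (x y : Fin 2) : ℝ :=
  ‖(∑ i : Fin 2, ∑ j : Fin 2,
      (starRingEnd ℂ) (measVec ((2 * (a : ℕ)) * π / (2 * N)) x i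
        * measVec ((2 * (b : ℕ) + 1) * π / (2 * N)) y j) * psi i j)‖ ^ 2

/-!
For the maximally entangled state the Born probability of the outcome pair `(x, y)` at angles
`α, β` is `cos²((α - β)/2)/2` if `x = y` and `sin²((α - β)/2)/2` otherwise. Each of the `2N - 1`
neighbouring pairs of settings differs in angle by `π/(2N)`, so its anticorrelated outcomes
contribute `sin²(π/(4N))`; the closing pair `(0, 2N - 1)` differs by `π - π/(2N)`, and its
correlated outcomes contribute `cos²(π/2 - π/(4N)) = sin²(π/(4N))` as well.
-/

lemma sum_range_sum_range_ite_adjacent {M : Type*} [AddCommMonoid M] (N : ℕ) (c : M) :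
    ∑ a ∈ range N, ∑ b ∈ range N, (if a = b ∨ a = b + 1 then c else 0) = (2 * N - 1) • c := by
  have hsplit : ∀ a b : ℕ, (if a = b ∨ a = b + 1 then c else 0)
      = (if a = b then c else 0) + (if a = b + 1 then c else 0) := by
    intro a b
    by_cases h : a = b <;> simp [h]
  have hshift : (range N).filter (fun b => b + 1 ∈ range N) = range (N - 1) := by
    ext b
    simp only [mem_filter, mem_range]
    omega
  simp only [hsplit, sum_add_distrib, sum_ite_eq, sum_ite_mem, inter_self, sum_const, card_range]
  rw [sum_comm]
  simp only [sum_ite_eq', ← sum_filter, hshift, sum_const, card_range, ← add_nsmul]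
  congr 1
  omega

lemma sum_sum_ite_adjacent {M : Type*} [AddCommMonoid M] {N : ℕ} {f : Fin N → Fin N → M}
    {c : M} (hf : ∀ a b : Fin N, (a : ℕ) = b ∨ (a : ℕ) = b + 1 → f a b = c) :
    ∑ a : Fin N, ∑ b : Fin N, (if (a : ℕ) = b ∨ (a : ℕ) = b + 1 then f a b else 0)
      = (2 * N - 1) • c := by
  calc ∑ a : Fin N, ∑ b : Fin N, (if (a : ℕ) = b ∨ (a : ℕ) = b + 1 then f a b else 0)
      = ∑ a : Fin N, ∑ b : Fin N, (if (a : ℕ) = b ∨ (a : ℕ) = b + 1 then c else 0) :=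
        sum_congr rfl fun a _ => sum_congr rfl fun b _ => if_ctx_congr Iff.rfl (hf a b) fun _ => rfl
    _ = ∑ a ∈ range N, ∑ b ∈ range N, (if a = b ∨ a = b + 1 then c else 0) := by
        rw [Fin.sum_univ_eq_sum_range (fun a => ∑ b : Fin N, if a = b ∨ a = b + 1 then c else 0)]
        exact sum_congr rfl fun a _ =>
          Fin.sum_univ_eq_sum_range (fun b => if a = b ∨ a = b + 1 then c else 0) N
    _ = (2 * N - 1) • c := sum_range_sum_range_ite_adjacent N c

lemma sum_sum_conj_mul_psi (v w : Fin 2 → ℂ) :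
    ∑ i : Fin 2, ∑ j : Fin 2, (starRingEnd ℂ) (v i * w j) * psi i j
      = (starRingEnd ℂ) (∑ i : Fin 2, v i * w i) / Real.sqrt 2 := by
  simp [psi, Fin.sum_univ_two, div_eq_mul_inv, add_mul]

lemma norm_sum_measVec_mul_sq (α β : ℝ) (x y : Fin 2) :
    ‖∑ i : Fin 2, measVec α x i * measVec β y i‖ ^ 2
      = (if x = y then Real.cos ((α - β) / 2) else Real.sin ((α - β) / 2)) ^ 2 := by
  have hab : (α - β) / 2 = α / 2 - β / 2 := by ring
  revert x y
  simp only [Fin.forall_fin_two]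
  refine ⟨⟨?_, ?_⟩, ?_, ?_⟩ <;>
    simp only [measVec, Fin.sum_univ_two, Fin.isValue, one_ne_zero, zero_ne_one, ↓reduceIte,
      ← Complex.ofReal_neg, ← Complex.ofReal_mul, ← Complex.ofReal_add, Complex.norm_real,
      Real.norm_eq_abs, sq_abs, hab, Real.cos_sub, Real.sin_sub]
  all_goals ring

def bornProb (α β : ℝ) (x y : Fin 2) : ℝ :=
  ‖(∑ i : Fin 2, ∑ j : Fin 2,
      (starRingEnd ℂ) (measVec α x i * measVec β y j) * psi i j)‖ ^ 2

lemma bornProb_eq (α β : ℝ) (x y : Fin 2) :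
    bornProb α β x y
      = (if x = y then Real.cos ((α - β) / 2) else Real.sin ((α - β) / 2)) ^ 2 / 2 := by
  rw [bornProb, sum_sum_conj_mul_psi, norm_div, Complex.norm_conj, div_pow,
    norm_sum_measVec_mul_sq, Complex.norm_real, Real.norm_eq_abs, sq_abs, Real.sq_sqrt zero_le_two]

lemma sum_bornProb_anticorrelated (α β : ℝ) :
    ∑ x : Fin 2, bornProb α β x (1 - x) = Real.sin ((α - β) / 2) ^ 2 := by
  rw [Fin.sum_univ_two, bornProb_eq, bornProb_eq, if_neg (by decide), if_neg (by decide),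
    add_halves]

lemma sum_bornProb_correlated (α β : ℝ) :
    ∑ x : Fin 2, bornProb α β x x = Real.cos ((α - β) / 2) ^ 2 := by
  rw [Fin.sum_univ_two, bornProb_eq, bornProb_eq, if_pos rfl, if_pos rfl, add_halves]

lemma quantumP_eq_bornProb (N : ℕ) (a b : Fin N) (x y : Fin 2) :
    quantumP N a b x y
      = bornProb (2 * (a : ℕ) * π / (2 * N)) ((2 * (b : ℕ) + 1) * π / (2 * N)) x y :=
  rfl

lemma quantumP_anticorrelated_of_adjacent {N : ℕ} {a b : Fin N}
    (hab : (a : ℕ) = b ∨ (a : ℕ) = b + 1) :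
    ∑ x : Fin 2, quantumP N a b x (1 - x) = Real.sin (π / (4 * N)) ^ 2 := by
  have hN : (N : ℝ) ≠ 0 := Nat.cast_ne_zero.mpr a.pos.ne'
  simp only [quantumP_eq_bornProb, sum_bornProb_anticorrelated]
  rcases hab with h | h
  · rw [h, ← neg_sq, ← Real.sin_neg]
    congr 2
    field_simp
    ring
  · rw [h]
    congr 2
    push_cast
    field_simp
    ring

lemma quantumP_correlated_extreme {N : ℕ} (hN : 0 < N) :
    ∑ x : Fin 2, quantumP N ⟨0, hN⟩ ⟨N - 1, by omega⟩ x x = Real.sin (π / (4 * N)) ^ 2 := by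
  have hN' : (N : ℝ) ≠ 0 := Nat.cast_ne_zero.mpr hN.ne'
  simp only [quantumP_eq_bornProb, sum_bornProb_correlated]
  rw [← Real.cos_pi_div_two_sub, ← Real.cos_neg]
  congr 2
  push_cast [Nat.cast_sub hN]
  field_simp
  ring

/-- The chained Bell quantity of the quantum distribution obtained by measuring
the maximally entangled state at angles `θ_i = iπ/(2N)` equals `2N·sin²(π/(4N))`. -/
theorem chainedBell_quantum_value (N : ℕ) (hN : 0 < N) :
    chainedBell N hN (quantumP N) = 2 * N * Real.sin (π / (4 * N)) ^ 2 := by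
  rw [chainedBell, sum_sum_ite_adjacent fun _ _ => quantumP_anticorrelated_of_adjacent,
    quantumP_correlated_extreme, nsmul_eq_mul, Nat.cast_sub (by omega)]
  push_cast
  ring

end
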